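/- arXiv:1108.3976 — 4 statements merged into one kernel-verified Lean document; each statement's English description precedes it below -/
import Mathlib

section
/- Let C: f=0 be a nodal curve of degree N in P^2 with two irreducible components f = f_1·f_2. Then the 2-form γ = −df_1 ∧ df_2 satisfies df ∧ γ = 0 and represents a nonzero class in H^2(K^*(f))_N. -/
open MvPolynomial

noncomputable section

/-- The polynomial ring `ℂ[x_0,…,x_n]`. -/
abbrev MvP (n : ℕ) := MvPolynomial (Fin (n + 1)) ℂ

/-- The Jacobian ideal of `f`, spanned by its partial derivatives. -/
def jacobianIdeal {n : ℕ} (f : MvP n) : Ideal (MvP n) :=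
  Ideal.span (Set.range fun i => pderiv i f)

/-- The dimension of the degree `k` graded piece of `S/I`. -/
def gradedPieceDim {n : ℕ} (I : Ideal (MvP n)) (k : ℕ) : ℕ :=
  Module.finrank ℂ
    (↥(homogeneousSubmodule (Fin (n + 1)) ℂ k) ⧸
      (Submodule.comap (homogeneousSubmodule (Fin (n + 1)) ℂ k).subtype
        (Submodule.restrictScalars ℂ I)))

/-- `dim M(f)_k`, the dimension of the degree `k` piece of the Milnor algebra `S/J_f`. -/
def milnorDim {n : ℕ} (f : MvP n) (k : ℕ) : ℕ :=
  gradedPieceDim (jacobianIdeal f) k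

/-- The Hilbert–Poincaré series of `S/I` as a power series over `ℤ`. -/
def hilbertSeries {n : ℕ} (I : Ideal (MvP n)) : PowerSeries ℤ :=
  PowerSeries.mk fun k => (gradedPieceDim I k : ℤ)

/-- The projective hypersurface `f = 0` is smooth: the partial derivatives have no
common zero besides the origin. -/
def IsSmoothHypersurface {n : ℕ} (f : MvP n) : Prop :=
  ∀ x : Fin (n + 1) → ℂ, (∀ i, eval x (pderiv i f) = 0) → x = 0

/-- The Hessian matrix of `f` evaluated at `p`. -/
def hessianAt {n : ℕ} (f : MvP n) (p : Fin (n + 1) → ℂ) :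
    Matrix (Fin (n + 1)) (Fin (n + 1)) ℂ :=
  Matrix.of fun i j => eval p (pderiv i (pderiv j f))

/-- All singular points of the projective hypersurface `f = 0` are nodes
(ordinary double points): at any singular point the Hessian has the maximal
possible rank `n` for a singular point of a cone. -/
def IsNodal {n : ℕ} (f : MvP n) : Prop :=
  ∀ p : Fin (n + 1) → ℂ, p ≠ 0 → (∀ i, eval p (pderiv i f) = 0) →
    (hessianAt f p).rank = n

/-- `𝒩` is a set of affine representatives (one for each projective point) of the
singular locus of the projective hypersurface `f = 0`. -/
def RepresentsSingLocus {n : ℕ} (f : MvP n) (𝒩 : Finset (Fin (n + 1) → ℂ)) : Prop :=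
  (∀ p ∈ 𝒩, p ≠ 0 ∧ ∀ i, eval p (pderiv i f) = 0) ∧
  (∀ p : Fin (n + 1) → ℂ, p ≠ 0 → (∀ i, eval p (pderiv i f) = 0) →
      ∃ q ∈ 𝒩, ∃ c : ℂ, c ≠ 0 ∧ p = c • q) ∧
  (∀ p ∈ 𝒩, ∀ q ∈ 𝒩, (∃ c : ℂ, c ≠ 0 ∧ p = c • q) → p = q)

/-- The `ℂ`-linear map `(a_0,…,a_n) ↦ Σ a_i ∂f/∂x_i`. -/
def jacobianPairing {n : ℕ} (f : MvP n) : (Fin (n + 1) → MvP n) →ₗ[ℂ] MvP n :=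
  ∑ i : Fin (n + 1),
    (LinearMap.mulRight ℂ (pderiv i f)).comp
      (LinearMap.proj (R := ℂ) (φ := fun _ : Fin (n + 1) => MvP n) i)

/-- The space of syzygies `Σ a_i ∂f/∂x_i = 0` with all `a_i` homogeneous of degree `m`.
Via `ω = Σ ± a_i dx_0 ∧ … ∧ \hat{dx_i} ∧ … ∧ dx_n` this is the degree `m + n` part of
the kernel of `Ω^n → Ω^{n+1}` in the Koszul complex `K^*(f)`. -/
def syzygySubmodule {n : ℕ} (f : MvP n) (m : ℕ) :
    Submodule ℂ (Fin (n + 1) → MvP n) :=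
  (⨅ i : Fin (n + 1),
      Submodule.comap (LinearMap.proj (R := ℂ) (φ := fun _ : Fin (n + 1) => MvP n) i)
        (homogeneousSubmodule (Fin (n + 1)) ℂ m)) ⊓
    LinearMap.ker (jacobianPairing f)

/-- The elementary (Koszul/trivial) syzygy `h·(…, f_j, …, -f_i, …)` attached to indices
`i, j` and a coefficient `h`. -/
def elementarySyzygy {n : ℕ} (f : MvP n) (i j : Fin (n + 1)) (h : MvP n) :
    Fin (n + 1) → MvP n :=
  fun k => (if k = i then h * pderiv j f else 0) - (if k = j then h * pderiv i f else 0)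

/-- The trivial (Koszul) syzygies of degree `m` among the partial derivatives of `f`,
where `f` is homogeneous of degree `N`; they are spanned by the elementary syzygies
with homogeneous coefficients `h` of degree `m - (N - 1)`.  This is the degree `m + n`
part of the image of `Ω^{n-1} → Ω^n` in the Koszul complex `K^*(f)`. -/
def trivialSyzygies {n : ℕ} (f : MvP n) (N m : ℕ) :
    Submodule ℂ (Fin (n + 1) → MvP n) :=
  Submodule.span ℂ
    {a | ∃ i j : Fin (n + 1), ∃ d : ℕ, ∃ h : MvP n,
      m = d + (N - 1) ∧ h ∈ homogeneousSubmodule (Fin (n + 1)) ℂ d ∧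
      a = elementarySyzygy f i j h}

/-- `dim H^n(K^*(f))_{m+n}`: the dimension of the space of syzygies of degree `m`
among the partial derivatives of `f` (of degree `N`), modulo the trivial ones. -/
def koszulSyzygyDim {n : ℕ} (f : MvP n) (N m : ℕ) : ℕ :=
  Module.finrank ℂ
    (↥(syzygySubmodule f m) ⧸
      Submodule.comap (syzygySubmodule f m).subtype (trivialSyzygies f N m))

/-- `mdr(D)`: the minimal degree of a nontrivial syzygy among the partial derivatives,
i.e. `min {q | H^n(K^*(f))_{q+n} ≠ 0}`. -/
def mdr {n : ℕ} (f : MvP n) (N : ℕ) : ℕ :=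
  sInf {m | ¬ syzygySubmodule f m ≤ trivialSyzygies f N m}

/-- `ct(D)`: the coincidence threshold
`max {q | dim M(f)_k = dim M(f_s)_k for all k ≤ q}`. -/
def coincidenceThreshold {n : ℕ} (f fs : MvP n) : ℕ :=
  sSup {q | ∀ k ≤ q, milnorDim f k = milnorDim fs k}

/-- `st(D)`: the stability threshold, the minimal `q` from which on the dimensions
`dim M(f)_k` are constant (for a hypersurface with isolated singularities this
constant value is the total Tjurina number `τ(D)`). -/
def stabilityThreshold {n : ℕ} (f : MvP n) : ℕ :=
  sInf {q | ∀ k, q ≤ k → milnorDim f k = milnorDim f q}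

/-- The degree `k` homogeneous polynomials vanishing at all points of `𝒩`. -/
def vanishingSubmodule {n : ℕ} (𝒩 : Finset (Fin (n + 1) → ℂ)) (k : ℕ) :
    Submodule ℂ (MvP n) :=
  homogeneousSubmodule (Fin (n + 1)) ℂ k ⊓
    ⨅ p ∈ 𝒩, LinearMap.ker ((aeval p : MvP n →ₐ[ℂ] ℂ).toLinearMap)

/-- The defect (superabundance) `defect S_k(𝒩) = |𝒩| - codim {h ∈ S_k | h|_𝒩 = 0}`. -/
def defect {n : ℕ} (k : ℕ) (𝒩 : Finset (Fin (n + 1) → ℂ)) : ℕ :=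
  𝒩.card -
    (Module.finrank ℂ ↥(homogeneousSubmodule (Fin (n + 1)) ℂ k) -
      Module.finrank ℂ ↥(vanishingSubmodule 𝒩 k))

/-- The vector of coefficients of the 2-form `dg ∧ dh` in the basis
`dy∧dz, dz∧dx, dx∧dy` (so that `df ∧ (a dy∧dz + b dz∧dx + c dx∧dy) =
(a f_x + b f_y + c f_z) dx∧dy∧dz`). -/
def cross3 (g h : MvPolynomial (Fin 3) ℂ) : Fin 3 → MvPolynomial (Fin 3) ℂ :=
  ![pderiv 1 g * pderiv 2 h - pderiv 2 g * pderiv 1 h,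
    pderiv 2 g * pderiv 0 h - pderiv 0 g * pderiv 2 h,
    pderiv 0 g * pderiv 1 h - pderiv 1 g * pderiv 0 h]

/-!
If the Jacobian minors of `f₁` and `f₂` all vanished, Euler's identity would give
`d₁ f₁ ∂ⱼf₂ = d₂ f₂ ∂ⱼf₁`. Since `f₁` is prime and does not divide `f₂`, it would then divide
all its own partial derivatives, and Euler's identity once more forces `f₁ = 0`. Hence
`df₁ ∧ df₂ ≠ 0`, and since the trivial Koszul relations only start in degree `N - 1`, its class
is nonzero.
-/

namespace MvPolynomial

variable {σ R K : Type*}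

lemma IsHomogeneous.degree_ne_zero_of_irreducible [Field K] {f : MvPolynomial σ K} {d : ℕ}
    (hf : f.IsHomogeneous d) (hirr : Irreducible f) : d ≠ 0 := by
  rintro rfl
  rw [← totalDegree_zero_iff_isHomogeneous, totalDegree_eq_zero_iff_eq_C] at hf
  have hc : coeff 0 f ≠ 0 := fun h => hirr.ne_zero (by rw [hf, h, C_0])
  exact hirr.not_isUnit (hf ▸ (isUnit_iff_ne_zero.2 hc).map C)

variable [Fintype σ]

lemma IsHomogeneous.nsmul_mul_pderiv_eq [CommSemiring R] {f g : MvPolynomial σ R} {d e : ℕ}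
    (hf : f.IsHomogeneous d) (hg : g.IsHomogeneous e)
    (hminors : ∀ i j, pderiv i f * pderiv j g = pderiv j f * pderiv i g) (j : σ) :
    d • f * pderiv j g = e • g * pderiv j f := by
  rw [← hf.sum_X_mul_pderiv, ← hg.sum_X_mul_pderiv, Finset.sum_mul, Finset.sum_mul]
  refine Finset.sum_congr rfl fun i _ => ?_
  rw [mul_assoc, hminors i j]
  ring

lemma IsHomogeneous.eq_zero_of_forall_dvd_pderiv [CommRing R] [IsDomain R] [CharZero R]
    {f : MvPolynomial σ R} {d : ℕ} (hf : f.IsHomogeneous d) (hd : d ≠ 0)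
    (hdvd : ∀ i, f ∣ pderiv i f) : f = 0 := by
  by_contra hne
  choose q hq using hdvd
  have heuler : f * d = f * ∑ i, X i * q i := by
    rw [mul_comm, ← nsmul_eq_mul, ← hf.sum_X_mul_pderiv, Finset.mul_sum]
    exact Finset.sum_congr rfl fun i _ => by rw [hq]; ring
  have := congrArg constantCoeff (mul_left_cancel₀ hne heuler)
  simp [hd] at this

theorem IsHomogeneous.exists_pderiv_mul_pderiv_ne [Field K] [CharZero K]
    {f g : MvPolynomial σ K} {d e : ℕ} (hf : f.IsHomogeneous d) (hg : g.IsHomogeneous e)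
    (hfi : Irreducible f) (hgi : Irreducible g) (hfg : ¬ Associated f g) :
    ∃ i j, pderiv i f * pderiv j g ≠ pderiv j f * pderiv i g := by
  by_contra! hminors
  have hndvd : ¬ f ∣ g := fun h => hfg (hfi.associated_of_dvd hgi h)
  have he : IsUnit (e : MvPolynomial σ K) := by
    rw [← map_natCast C]
    exact (isUnit_iff_ne_zero.2 (Nat.cast_ne_zero.2 (hg.degree_ne_zero_of_irreducible hgi))).map C
  refine hfi.ne_zero (hf.eq_zero_of_forall_dvd_pderiv
    (hf.degree_ne_zero_of_irreducible hfi) fun j => ?_)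
  have hdvd : f ∣ e * (g * pderiv j f) := ⟨d * pderiv j g, by
    rw [← mul_assoc, ← nsmul_eq_mul, ← hf.nsmul_mul_pderiv_eq hg hminors j, nsmul_eq_mul]
    ring⟩
  exact (hfi.prime.dvd_or_dvd ((he.dvd_mul_left).1 hdvd)).resolve_left hndvd

end MvPolynomial

lemma pderiv_mul_pderiv_comm_of_cross3_eq_zero {g h : MvPolynomial (Fin 3) ℂ}
    (hγ : cross3 g h = 0) (i j : Fin 3) :
    pderiv i g * pderiv j h = pderiv j g * pderiv i h := by
  have h0 := congrFun hγ 0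
  have h1 := congrFun hγ 1
  have h2 := congrFun hγ 2
  simp only [cross3, Pi.zero_apply, Matrix.cons_val] at h0 h1 h2
  fin_cases i <;> fin_cases j <;> grind

theorem cross3_ne_zero {f₁ f₂ : MvPolynomial (Fin 3) ℂ} {d₁ d₂ : ℕ}
    (h1 : f₁.IsHomogeneous d₁) (h2 : f₂.IsHomogeneous d₂)
    (hirr1 : Irreducible f₁) (hirr2 : Irreducible f₂) (hdist : ¬ Associated f₁ f₂) :
    cross3 f₁ f₂ ≠ 0 := fun hγ =>
  let ⟨i, j, hij⟩ := h1.exists_pderiv_mul_pderiv_ne h2 hirr1 hirr2 hdist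
  hij (pderiv_mul_pderiv_comm_of_cross3_eq_zero hγ i j)

lemma trivialSyzygies_eq_bot {n : ℕ} (f : MvP n) {N m : ℕ} (hm : m + 1 < N) :
    trivialSyzygies f N m = ⊥ := by
  rw [trivialSyzygies, Submodule.span_eq_bot]
  rintro _ ⟨_, _, _, _, hm', -, -⟩
  omega

lemma jacobianPairing_apply {n : ℕ} (f : MvP n) (a : Fin (n + 1) → MvP n) :
    jacobianPairing f a = ∑ i, a i * pderiv i f := by
  simp only [jacobianPairing, LinearMap.sum_apply, LinearMap.comp_apply, LinearMap.proj_apply,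
    LinearMap.mulRight_apply]

lemma jacobianPairing_mul_cross3 (f₁ f₂ : MvPolynomial (Fin 3) ℂ) :
    jacobianPairing (n := 2) (f₁ * f₂) (cross3 f₁ f₂) = 0 := by
  rw [jacobianPairing_apply, Fin.sum_univ_three]
  simp only [cross3, pderiv_mul, Matrix.cons_val]
  ring

lemma cross3_mem_syzygySubmodule {f₁ f₂ : MvPolynomial (Fin 3) ℂ} {d₁ d₂ : ℕ}
    (h1 : f₁.IsHomogeneous (d₁ + 1)) (h2 : f₂.IsHomogeneous (d₂ + 1)) :
    cross3 f₁ f₂ ∈ syzygySubmodule (n := 2) (f₁ * f₂) (d₁ + d₂) := by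
  have hminor : ∀ a b c e : Fin 3,
      (pderiv a f₁ * pderiv b f₂ - pderiv c f₁ * pderiv e f₂).IsHomogeneous (d₁ + d₂) :=
    fun a b c e => (h1.pderiv.mul h2.pderiv).sub (h1.pderiv.mul h2.pderiv)
  refine Submodule.mem_inf.2 ⟨Submodule.mem_iInf _ |>.2 fun i => ?_,
    jacobianPairing_mul_cross3 f₁ f₂⟩
  fin_cases i <;> exact hminor _ _ _ _

theorem statement6_general (N d₁ d₂ : ℕ) (f f₁ f₂ : MvPolynomial (Fin 3) ℂ)
    (hfact : f = f₁ * f₂) (h1 : f₁.IsHomogeneous d₁) (h2 : f₂.IsHomogeneous d₂)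
    (hN : d₁ + d₂ = N) (hirr1 : Irreducible f₁) (hirr2 : Irreducible f₂)
    (hdist : ¬ Associated f₁ f₂) :
    (fun i => -(cross3 f₁ f₂ i)) ∈ syzygySubmodule (n := 2) f (N - 2) ∧
    (fun i => -(cross3 f₁ f₂ i)) ∉ trivialSyzygies (n := 2) f N (N - 2) := by
  obtain ⟨k₁, rfl⟩ := Nat.exists_eq_add_one_of_ne_zero (h1.degree_ne_zero_of_irreducible hirr1)
  obtain ⟨k₂, rfl⟩ := Nat.exists_eq_add_one_of_ne_zero (h2.degree_ne_zero_of_irreducible hirr2)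
  have hdeg : N - 2 = k₁ + k₂ := by omega
  subst hfact
  rw [hdeg]
  refine ⟨neg_mem (cross3_mem_syzygySubmodule h1 h2), ?_⟩
  rw [trivialSyzygies_eq_bot _ (by omega), Submodule.mem_bot]
  exact neg_ne_zero.2 (cross3_ne_zero h1 h2 hirr1 hirr2 hdist)

/-- Let `C : f = 0` be a nodal curve of degree `N` in `ℙ^2` with two
irreducible components, `f = f₁ f₂`.  The 2-form `γ = -df₁ ∧ df₂` satisfies `df ∧ γ = 0`
(i.e. its coefficient vector is a syzygy, homogeneous of degree `N - 2`) and represents a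
nonzero class in `H^2(K^*(f))_N` (it is not a trivial Koszul relation). -/
theorem statement6 (N d₁ d₂ : ℕ) (f f₁ f₂ : MvPolynomial (Fin 3) ℂ)
    (hfact : f = f₁ * f₂) (h1 : f₁.IsHomogeneous d₁) (h2 : f₂.IsHomogeneous d₂)
    (hN : d₁ + d₂ = N) (hirr1 : Irreducible f₁) (hirr2 : Irreducible f₂)
    (hdist : ¬ Associated f₁ f₂) (hnod : IsNodal (n := 2) f) :
    (fun i => -(cross3 f₁ f₂ i)) ∈ syzygySubmodule (n := 2) f (N - 2) ∧
    (fun i => -(cross3 f₁ f₂ i)) ∉ trivialSyzygies (n := 2) f N (N - 2) :=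
  statement6_general N d₁ d₂ f f₁ f₂ hfact h1 h2 hN hirr1 hirr2 hdist

end
end

section
/- Let C: f=0 be a nodal curve of degree N in P^2 with r ≥ 3 irreducible components f = f_1···f_r. For each j = 1,...,r−1, the 2-form γ_j = −(f_1···f̂_j···f̂_r) df_j ∧ df_r + h_j σ, where σ = Δ(dx∧dy∧dz) is the contraction of the volume form with the Euler vector field and h_j = (1/N) Σ_{k≠j, k≠r} (f/(f_k f_j f_r)) Jac(f_k, f_j, f_r), satisfies df ∧ γ_j = 0. -/
open MvPolynomial

noncomputable section

/-- The Jacobian determinant `Jac(g₁,g₂,g₃)` with respect to `x, y, z`. -/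
def jac3 (g₁ g₂ g₃ : MvPolynomial (Fin 3) ℂ) : MvPolynomial (Fin 3) ℂ :=
  Matrix.det (Matrix.of fun i j : Fin 3 => pderiv i (![g₁, g₂, g₃] j))

section Aux

private lemma aux_pderiv_finset_prod {ι : Type*} [DecidableEq ι] (i : Fin 3) (s : Finset ι)
    (F : ι → MvPolynomial (Fin 3) ℂ) :
    pderiv i (∏ l ∈ s, F l) = ∑ k ∈ s, pderiv i (F k) * ∏ l ∈ s.erase k, F l := by
  induction s using Finset.induction_on with
  | empty => simp
  | @insert a s h ih =>
    rw [Finset.prod_insert h, pderiv_mul, ih, Finset.sum_insert h, Finset.erase_insert h,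
      Finset.mul_sum]
    congr 1
    apply Finset.sum_congr rfl
    intro k hk
    rw [Finset.erase_insert_of_ne (by rintro rfl; exact h hk),
      Finset.prod_insert (fun ha => h (Finset.mem_of_mem_erase ha))]
    ring

private lemma aux_weight_sum (dd : Fin 3 →₀ ℕ) :
    (Finsupp.weight 1) dd = ∑ i : Fin 3, dd i := by
  rw [Finsupp.weight_apply]
  simp [Finsupp.sum_fintype]

private lemma aux_euler3 {f : MvPolynomial (Fin 3) ℂ} {N : ℕ} (h : f.IsHomogeneous N) :
    ∑ i : Fin 3, X i * pderiv i f = C (N : ℂ) * f := by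
  conv_lhs => rw [f.as_sum]
  conv_rhs => rw [f.as_sum]
  simp only [map_sum, Finset.mul_sum]
  rw [Finset.sum_comm]
  apply Finset.sum_congr rfl
  intro dd hdd
  have hw : (∑ i : Fin 3, dd i) = N := by
    have := h (mem_support_iff.mp hdd)
    rw [← this, aux_weight_sum]
  have key : ∀ i : Fin 3, X i * pderiv i (monomial dd (coeff dd f))
      = monomial dd ((dd i : ℂ) * coeff dd f) := by
    intro i
    rw [pderiv_monomial]
    by_cases h0 : dd i = 0
    · simp [h0]
    · rw [X, monomial_mul, one_mul]
      have hs : (Finsupp.single i 1) + (dd - Finsupp.single i 1) = dd := by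
        ext j
        by_cases hji : j = i
        · subst hji
          simp only [Finsupp.add_apply, Finsupp.tsub_apply, Finsupp.single_eq_same]
          omega
        · simp [Finsupp.single_apply, Ne.symm hji]
      rw [hs]
      congr 1
      ring
  simp only [key]
  rw [← map_sum, ← Finset.sum_mul, C_mul_monomial]
  congr 1
  rw [← hw]
  push_cast
  ring

private lemma aux_pderiv_homog0 {f : MvPolynomial (Fin 3) ℂ} (h : f.IsHomogeneous 0)
    (i : Fin 3) : pderiv i f = 0 := by
  conv_lhs => rw [f.as_sum]
  rw [map_sum]
  apply Finset.sum_eq_zero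
  intro dd hdd
  have hw : (∑ i : Fin 3, dd i) = 0 := by
    have := h (mem_support_iff.mp hdd)
    rw [← this, aux_weight_sum]
  have hi : dd i = 0 := by
    have := Finset.sum_eq_zero_iff.mp hw i (Finset.mem_univ i)
    exact this
  rw [pderiv_monomial, hi]
  simp

private lemma aux_jac3_eq_sum (e g h : MvPolynomial (Fin 3) ℂ) :
    jac3 e g h = ∑ i : Fin 3, cross3 g h i * pderiv i e := by
  simp only [jac3, cross3, Matrix.det_fin_three, Matrix.of_apply, Fin.sum_univ_three,
    Matrix.cons_val_zero, Matrix.cons_val_one, Matrix.head_cons, Matrix.cons_val_two,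
    Matrix.tail_cons]
  ring

private lemma aux_jac3_11 (g h : MvPolynomial (Fin 3) ℂ) : jac3 g g h = 0 := by
  simp only [jac3, Matrix.det_fin_three, Matrix.of_apply,
    Matrix.cons_val_zero, Matrix.cons_val_one, Matrix.head_cons, Matrix.cons_val_two,
    Matrix.tail_cons]
  ring

private lemma aux_jac3_13 (g h : MvPolynomial (Fin 3) ℂ) : jac3 h g h = 0 := by
  simp only [jac3, Matrix.det_fin_three, Matrix.of_apply,
    Matrix.cons_val_zero, Matrix.cons_val_one, Matrix.head_cons, Matrix.cons_val_two,
    Matrix.tail_cons]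
  ring

end Aux

/-- Let `C : f = 0` be a nodal curve of degree `N` in `ℙ^2` with `r ≥ 3`
irreducible components `f = f₁ ⋯ f_r`.  For each `j ≠ r`, the 2-form
`γ_j = -(f₁⋯f̂_j⋯f̂_r) df_j ∧ df_r + h_j σ`, where `σ = Δ(dx∧dy∧dz)` (with coefficient
vector `(x,y,z)`) and `h_j = (1/N) Σ_{k ≠ j,r} (f/(f_k f_j f_r)) Jac(f_k, f_j, f_r)`,
satisfies `df ∧ γ_j = 0`. -/

theorem statement7 (r N : ℕ) (hr : 3 ≤ r) (d : Fin r → ℕ)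
    (F : Fin r → MvPolynomial (Fin 3) ℂ)
    (hd : ∀ j, (F j).IsHomogeneous (d j)) (hirr : ∀ j, Irreducible (F j))
    (hdist : ∀ j k, j ≠ k → ¬ Associated (F j) (F k))
    (f : MvPolynomial (Fin 3) ℂ) (hfact : f = ∏ j, F j)
    (hhom : f.IsHomogeneous N) (hnod : IsNodal (n := 2) f)
    (jr : Fin r) (hjr : (jr : ℕ) = r - 1) :
    ∀ j : Fin r, j ≠ jr →
      (∑ i : Fin 3,
        (-(∏ l ∈ (Finset.univ.erase j).erase jr, F l) * cross3 (F j) (F jr) i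
          + (C ((N : ℂ)⁻¹) *
              ∑ k ∈ (Finset.univ.erase j).erase jr,
                (∏ l ∈ ((Finset.univ.erase k).erase j).erase jr, F l) *
                  jac3 (F k) (F j) (F jr)) * X i) * pderiv i f) = 0 := by
  intro j hj
  by_cases hN : N = 0
  · subst hN
    have hz : ∀ i : Fin 3, pderiv i f = 0 := aux_pderiv_homog0 hhom
    simp [hz]
  · set E : Finset (Fin r) := (Finset.univ.erase j).erase jr with hE
    set P : MvPolynomial (Fin 3) ℂ := ∏ l ∈ E, F l with hP
    set S : MvPolynomial (Fin 3) ℂ :=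
      ∑ k ∈ E, (∏ l ∈ ((Finset.univ.erase k).erase j).erase jr, F l)
        * jac3 (F k) (F j) (F jr) with hS
    clear_value E P S
    have h1 : (∑ i : Fin 3,
        (-P * cross3 (F j) (F jr) i + (C ((N : ℂ)⁻¹) * S) * X i) * pderiv i f)
        = -P * jac3 f (F j) (F jr) + (C ((N : ℂ)⁻¹) * S) * (C (N : ℂ) * f) := by
      rw [aux_jac3_eq_sum, ← aux_euler3 hhom, Finset.mul_sum, Finset.mul_sum,
        ← Finset.sum_add_distrib]
      apply Finset.sum_congr rfl
      intro i _
      ring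
    rw [h1]
    have hC : (C ((N : ℂ)⁻¹) : MvPolynomial (Fin 3) ℂ) * C ((N : ℂ)) = 1 := by
      rw [← C_mul, inv_mul_cancel₀ (Nat.cast_ne_zero.mpr hN), C_1]
    have h2 : (C ((N : ℂ)⁻¹) * S) * (C (N : ℂ) * f) = S * f := by
      calc (C ((N : ℂ)⁻¹) * S) * (C (N : ℂ) * f)
          = (C ((N : ℂ)⁻¹) * C ((N : ℂ))) * (S * f) := by ring
        _ = S * f := by rw [hC, one_mul]
    rw [h2]
    have hjac : jac3 f (F j) (F jr)
        = ∑ k ∈ E, jac3 (F k) (F j) (F jr) * ∏ l ∈ Finset.univ.erase k, F l := by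
      rw [aux_jac3_eq_sum]
      have hpd : ∀ i : Fin 3, pderiv i f
          = ∑ k : Fin r, pderiv i (F k) * ∏ l ∈ Finset.univ.erase k, F l := by
        intro i
        rw [hfact]
        exact aux_pderiv_finset_prod i _ F
      simp_rw [hpd, Finset.mul_sum]
      rw [Finset.sum_comm]
      have step : ∀ k : Fin r,
          (∑ i : Fin 3, cross3 (F j) (F jr) i
              * (pderiv i (F k) * ∏ l ∈ Finset.univ.erase k, F l))
            = jac3 (F k) (F j) (F jr) * ∏ l ∈ Finset.univ.erase k, F l := by
        intro k
        rw [aux_jac3_eq_sum, Finset.sum_mul]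
        apply Finset.sum_congr rfl
        intro i _
        ring
      rw [Finset.sum_congr rfl fun k _ => step k]
      symm
      apply Finset.sum_subset (Finset.subset_univ _)
      intro k _ hk
      rw [hE] at hk
      rcases eq_or_ne k jr with rfl | hkr
      · rw [aux_jac3_13, zero_mul]
      rcases eq_or_ne k j with rfl | hkj
      · rw [aux_jac3_11, zero_mul]
      exact absurd (Finset.mem_erase.mpr ⟨hkr, Finset.mem_erase.mpr ⟨hkj, Finset.mem_univ k⟩⟩) hk
    rw [hjac, hS, Finset.mul_sum, Finset.sum_mul, ← Finset.sum_add_distrib]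
    apply Finset.sum_eq_zero
    intro k hk
    have e3 : ((Finset.univ.erase k).erase j).erase jr = E.erase k := by
      rw [hE]
      ext a
      simp only [Finset.mem_erase, Finset.mem_univ, and_true]
      tauto
    have e1 : P = F k * ∏ l ∈ E.erase k, F l := by
      rw [hP]
      exact (Finset.mul_prod_erase E F hk).symm
    have e2 : f = F k * ∏ l ∈ Finset.univ.erase k, F l := by
      rw [hfact]
      exact (Finset.mul_prod_erase _ F (Finset.mem_univ k)).symm
    rw [e3, e2, e1]
    ring


end
end

section
/- For f = z^p(x^q + y^q) + x^N + y^N with p+q = N, the identity z^{p−1}x(qz^p + Ny^p)f_x + z^{p−1}y(qz^p + Nx^p)f_y − (1/p)(qz^p + Ny^p)(qz^p + Nx^p)f_z = 0 holds, giving a syzygy of degree 2p among the partial derivatives of f. -/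
open MvPolynomial

noncomputable section

/-- For `f = z^p (x^q + y^q) + x^N + y^N` with `p + q = N`, `p, q ≥ 1`,
the identity
`z^{p-1} x (q z^p + N y^p) f_x + z^{p-1} y (q z^p + N x^p) f_y
  - (1/p)(q z^p + N y^p)(q z^p + N x^p) f_z = 0`
holds, a syzygy of degree `2p` among the partial derivatives of `f`. -/
theorem statement12 (p q N : ℕ) (hp : 0 < p) (hq : 0 < q) (hN : N = p + q)
    (f : MvPolynomial (Fin 3) ℂ)
    (hf : f = X 2 ^ p * (X 0 ^ q + X 1 ^ q) + X 0 ^ N + X 1 ^ N) :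
    X 2 ^ (p - 1) * X 0 * (C (q : ℂ) * X 2 ^ p + C (N : ℂ) * X 1 ^ p) * pderiv 0 f
      + X 2 ^ (p - 1) * X 1 * (C (q : ℂ) * X 2 ^ p + C (N : ℂ) * X 0 ^ p) * pderiv 1 f
      - C ((p : ℂ)⁻¹) * ((C (q : ℂ) * X 2 ^ p + C (N : ℂ) * X 1 ^ p) *
          (C (q : ℂ) * X 2 ^ p + C (N : ℂ) * X 0 ^ p)) * pderiv 2 f = 0 := by
  obtain ⟨p, rfl⟩ : ∃ p', p = p' + 1 := ⟨p - 1, (Nat.succ_pred_eq_of_pos hp).symm⟩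
  obtain ⟨q, rfl⟩ : ∃ q', q = q' + 1 := ⟨q - 1, (Nat.succ_pred_eq_of_pos hq).symm⟩
  subst hN hf
  have hpne : ((p : ℂ) + 1) ≠ 0 := by
    intro h
    have := congrArg Complex.re h
    push_cast at this
    norm_num at this
    linarith [Nat.cast_nonneg (α := ℝ) p, this]
  simp only [map_add, pderiv_mul, pderiv_pow, pderiv_X,
    Pi.single_eq_same, Pi.single_eq_of_ne (by decide : (0:Fin 3) ≠ 2),
    Pi.single_eq_of_ne (by decide : (1:Fin 3) ≠ 2),
    Pi.single_eq_of_ne (by decide : (2:Fin 3) ≠ 0),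
    Pi.single_eq_of_ne (by decide : (2:Fin 3) ≠ 1),
    Pi.single_eq_of_ne (by decide : (0:Fin 3) ≠ 1),
    Pi.single_eq_of_ne (by decide : (1:Fin 3) ≠ 0)]
  have e1 : p + 1 + (q + 1) - 1 = p + q + 1 := by omega
  have e2 : p + 1 - 1 = p := rfl
  rw [e1, e2]
  push_cast
  simp only [map_add, map_natCast, map_one]
  have hC : (C ((((p:ℕ):ℂ) + 1)⁻¹) : MvPolynomial (Fin 3) ℂ) * ((p : MvPolynomial (Fin 3) ℂ) + 1) = 1 := by
    rw [show ((p : MvPolynomial (Fin 3) ℂ) + 1) = C (((p:ℕ):ℂ) + 1) by push_cast [map_add, map_natCast, map_one]; ring,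
      ← C_mul, inv_mul_cancel₀ hpne, C_1]
  linear_combination (-((((q:MvPolynomial (Fin 3) ℂ)+1) * X 2 ^ (p+1) + ((p:MvPolynomial (Fin 3) ℂ)+1+((q:MvPolynomial (Fin 3) ℂ)+1)) * X 1 ^ (p+1)) *
      (((q:MvPolynomial (Fin 3) ℂ)+1) * X 2 ^ (p+1) + ((p:MvPolynomial (Fin 3) ℂ)+1+((q:MvPolynomial (Fin 3) ℂ)+1)) * X 0 ^ (p+1)) *
      X 2 ^ p * (X 0 ^ (q+1) + X 1 ^ (q+1)))) * hC

end
end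

section
/- Suppose S/I' has a graded minimal free resolution 0 → ⊕_{i=1}^t S(−b_i) → ⊕_{j=1}^{t+1} S(−a_j) → S → S/I' → 0 with 0 < a_j < N for all j, 0 < b_i ≤ N for all i, and exactly r−1 of the b_i equal N, where I' is the saturated ideal of a finite set of points 𝒩 in P^2. Then dim(S/I')_k = |𝒩| for all k ≥ N−2 and dim(S/I')_{N−3} = |𝒩| − (r−1); equivalently defect S_k(𝒩) = 0 for k > N−3 and defect S_{N−3}(𝒩) = r−1. -/
open MvPolynomial

noncomputable section

/-!
Restricting the resolution to degree `k` gives an exact sequence of finite-dimensional vector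
spaces, so `dim (S/I')_k = C(k+2, 2) - ∑ⱼ C(k-aⱼ+2, 2) + ∑ᵢ C(k-bᵢ+2, 2)`. For `k ≥ N - 2` every
binomial coefficient here agrees with its polynomial `(k-a+2)(k-a+1)/2`, and as there is one more
`aⱼ` than `bᵢ` the quadratic terms cancel: from `N - 2` on the Hilbert function is affine in `k`.
It equals `|𝒩|` for `k ≥ |𝒩| - 1`, where products of linear forms separate the points, hence it is
constantly `|𝒩|`. At `k = N - 3` the polynomial is off only at the `r - 1` shifts `bᵢ = N`, by
exactly one each. Finally `defect S_k(𝒩) = |𝒩| - dim (S/I')_k`, since `(S/I')_k` is the image of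
evaluation at `𝒩`.
-/

namespace MvPolynomial

section Homogeneous

variable {σ R : Type*} [CommSemiring R]

theorem IsHomogeneous.eval_smul {φ : MvPolynomial σ R} {n : ℕ} (hφ : φ.IsHomogeneous n)
    (c : R) (x : σ → R) : eval (c • x) φ = c ^ n * eval x φ := by
  rw [eval_eq, eval_eq, Finset.mul_sum]
  refine Finset.sum_congr rfl fun d hd => ?_
  have hdeg : ∑ i ∈ d.support, d i = n := by
    rw [← Finsupp.degree_apply, Finsupp.degree_eq_weight_one]
    exact hφ (mem_support_iff.mp hd)
  simp only [Pi.smul_apply, smul_eq_mul, mul_pow, Finset.prod_mul_distrib,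
    Finset.prod_pow_eq_pow_sum, hdeg]
  ring

/-- The degree `k` part of the shifted module `S(-a)`, as a submodule of `S`. -/
def shiftedHomogeneousSubmodule (σ R : Type*) [CommSemiring R] (a k : ℕ) :
    Submodule R (MvPolynomial σ R) :=
  if a ≤ k then homogeneousSubmodule σ R (k - a) else ⊥

theorem shiftedHomogeneousSubmodule_zero (σ R : Type*) [CommSemiring R] (k : ℕ) :
    shiftedHomogeneousSubmodule σ R 0 k = homogeneousSubmodule σ R k := by
  simp [shiftedHomogeneousSubmodule]

def shiftedHomogeneousComponent (a k : ℕ) : MvPolynomial σ R →ₗ[R] MvPolynomial σ R :=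
  if a ≤ k then homogeneousComponent (k - a) else 0

instance [Finite σ] (k : ℕ) : Module.Finite R (homogeneousSubmodule σ R k) :=
  Module.Finite.iff_fg.mpr (homogeneousSubmodule_fg σ R k)

instance [Finite σ] (a k : ℕ) : Module.Finite R (shiftedHomogeneousSubmodule σ R a k) := by
  refine Module.Finite.iff_fg.mpr ?_
  unfold shiftedHomogeneousSubmodule
  split_ifs
  exacts [homogeneousSubmodule_fg σ R _, Submodule.fg_bot]

theorem shiftedHomogeneousComponent_mem (a k : ℕ) (x : MvPolynomial σ R) :
    shiftedHomogeneousComponent a k x ∈ shiftedHomogeneousSubmodule σ R a k := by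
  unfold shiftedHomogeneousComponent shiftedHomogeneousSubmodule
  split_ifs
  · exact homogeneousComponent_mem _ _
  · exact zero_mem _

theorem shiftedHomogeneousComponent_eq_self {a k : ℕ} {x : MvPolynomial σ R}
    (hx : x ∈ shiftedHomogeneousSubmodule σ R a k) : shiftedHomogeneousComponent a k x = x := by
  unfold shiftedHomogeneousComponent shiftedHomogeneousSubmodule at *
  split_ifs at * with h
  · exact homogeneousComponent_of_mem hx ▸ if_pos rfl
  · exact ((Submodule.mem_bot R).mp hx).symm

theorem homogeneousComponent_mul_of_isHomogeneous {g : MvPolynomial σ R} {a : ℕ}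
    (hg : g.IsHomogeneous a) (k : ℕ) (x : MvPolynomial σ R) :
    homogeneousComponent k (x * g) = shiftedHomogeneousComponent a k x * g := by
  induction x using MvPolynomial.induction_on' with
  | monomial d c =>
    have hd : (monomial d c).IsHomogeneous d.degree := isHomogeneous_monomial _ rfl
    rw [homogeneousComponent_of_mem (hd.mul hg), shiftedHomogeneousComponent]
    by_cases hak : a ≤ k
    · by_cases hk : k = d.degree + a
      · simp [hk, homogeneousComponent_of_mem hd]
      · simp [hk, hak, homogeneousComponent_of_mem hd, show k - a ≠ d.degree by omega]
    · simp [hak, show k ≠ d.degree + a by omega]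
  | add p q hp hq => rw [add_mul, map_add, map_add, hp, hq, add_mul]

theorem mul_mem_homogeneousSubmodule {a k : ℕ} {x g : MvPolynomial σ R}
    (hx : x ∈ shiftedHomogeneousSubmodule σ R a k) (hg : g.IsHomogeneous a) :
    x * g ∈ homogeneousSubmodule σ R k := by
  rw [← shiftedHomogeneousComponent_eq_self hx, ← homogeneousComponent_mul_of_isHomogeneous hg]
  exact homogeneousComponent_mem _ _

theorem mul_mem_shiftedHomogeneousSubmodule {a b k : ℕ} {m x : MvPolynomial σ R}
    (hm : m.IsHomogeneous (b - a)) (hab : m ≠ 0 → a ≤ b)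
    (hx : x ∈ shiftedHomogeneousSubmodule σ R b k) :
    m * x ∈ shiftedHomogeneousSubmodule σ R a k := by
  rcases eq_or_ne m 0 with rfl | hm0
  · simp
  have hab := hab hm0
  unfold shiftedHomogeneousSubmodule at hx ⊢
  split_ifs at hx with hbk
  · rw [if_pos (hab.trans hbk)]
    simpa [show b - a + (k - b) = k - a by omega] using hm.mul hx
  · simp [(Submodule.mem_bot R).mp hx]

theorem shiftedHomogeneousComponent_mul {a b k : ℕ} {m : MvPolynomial σ R}
    (hm : m.IsHomogeneous (b - a)) (hab : m ≠ 0 → a ≤ b) (x : MvPolynomial σ R) :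
    shiftedHomogeneousComponent a k (m * x) = m * shiftedHomogeneousComponent b k x := by
  rcases eq_or_ne m 0 with rfl | hm0
  · simp
  have hab := hab hm0
  by_cases hak : a ≤ k
  · rw [shiftedHomogeneousComponent, if_pos hak, mul_comm m,
      homogeneousComponent_mul_of_isHomogeneous hm, mul_comm]
    simp only [shiftedHomogeneousComponent, show b - a ≤ k - a ↔ b ≤ k by omega,
      show k - a - (b - a) = k - b by omega]
  · simp [shiftedHomogeneousComponent, hak, show ¬ b ≤ k by omega]

end Homogeneous

theorem finrank_homogeneousSubmodule {σ R : Type*} [Fintype σ] [CommRing R] [Nontrivial R]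
    (k : ℕ) :
    Module.finrank R (homogeneousSubmodule σ R k) = (Fintype.card σ + k - 1).choose k := by
  classical
  have hdeg : {d : σ →₀ ℕ | d.degree = k} = ↑((Finset.univ : Finset σ).finsuppAntidiag k) := by
    ext d
    simp [Finsupp.degree_eq_sum]
  rw [Module.finrank_eq_nat_card_basis ((basisRestrictSupport R _).map (LinearEquiv.ofEq _ _
    (homogeneousSubmodule_eq_finsupp_supported σ R k).symm)), hdeg, Nat.card_coe_set_eq,
    Set.ncard_coe_finset, Finset.card_finsuppAntidiag_nat_eq_choose, Finset.card_univ]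

end MvPolynomial

section Resolution

variable {σ K ι κ : Type*} [Field K]
  {a : ι → ℕ} {b : κ → ℕ} {v : ι → MvPolynomial σ K} {M : ι → κ → MvPolynomial σ K}

/-- The degree `k` strand of `⊕ⱼ S(-aⱼ) → S`. -/
def generatorMap [Fintype ι] (hv : ∀ j, (v j).IsHomogeneous (a j)) (k : ℕ) :
    (∀ j, shiftedHomogeneousSubmodule σ K (a j) k) →ₗ[K] homogeneousSubmodule σ K k where
  toFun y := ⟨∑ j, (y j : MvPolynomial σ K) * v j,
    sum_mem fun j _ => mul_mem_homogeneousSubmodule (y j).2 (hv j)⟩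
  map_add' y z := by ext; simp [add_mul, Finset.sum_add_distrib]
  map_smul' c y := by ext; simp [Finset.smul_sum]

/-- The degree `k` strand of `⊕ᵢ S(-bᵢ) → ⊕ⱼ S(-aⱼ)`. -/
def relationMap [Fintype κ]
    (hM : ∀ j i, (M j i).IsHomogeneous (b i - a j) ∧ (M j i ≠ 0 → a j ≤ b i))
    (k : ℕ) :
    (∀ i, shiftedHomogeneousSubmodule σ K (b i) k) →ₗ[K]
      (∀ j, shiftedHomogeneousSubmodule σ K (a j) k) where
  toFun x j := ⟨∑ i, M j i * (x i : MvPolynomial σ K),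
    sum_mem fun i _ => mul_mem_shiftedHomogeneousSubmodule (hM j i).1 (hM j i).2 (x i).2⟩
  map_add' x z := by funext j; ext; simp [mul_add, Finset.sum_add_distrib]
  map_smul' c x := by funext j; ext; simp [Finset.smul_sum]

theorem range_generatorMap [Fintype ι] (hv : ∀ j, (v j).IsHomogeneous (a j)) (k : ℕ) :
    LinearMap.range (generatorMap hv k) =
      Submodule.comap (homogeneousSubmodule σ K k).subtype
        ((Ideal.span (Set.range v)).restrictScalars K) := by
  ext z
  simp only [Submodule.mem_comap, Submodule.restrictScalars_mem, Submodule.subtype_apply,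
    LinearMap.mem_range]
  constructor
  · rintro ⟨y, rfl⟩
    exact Ideal.sum_mem _ fun j _ => Ideal.mul_mem_left _ _ (Ideal.subset_span ⟨j, rfl⟩)
  · intro hz
    obtain ⟨c, hc⟩ := Ideal.mem_span_range_iff_exists_fun.mp hz
    refine ⟨fun j => ⟨_, shiftedHomogeneousComponent_mem (a j) k (c j)⟩, Subtype.ext ?_⟩
    calc ∑ j, shiftedHomogeneousComponent (a j) k (c j) * v j
        = homogeneousComponent k (∑ j, c j * v j) := by
          simp only [map_sum, homogeneousComponent_mul_of_isHomogeneous (hv _)]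
      _ = z := by rw [hc, homogeneousComponent_of_mem z.2, if_pos rfl]

theorem ker_generatorMap [Fintype ι] [Fintype κ] (hv : ∀ j, (v j).IsHomogeneous (a j))
    (hM : ∀ j i, (M j i).IsHomogeneous (b i - a j) ∧ (M j i ≠ 0 → a j ≤ b i))
    (hexact : ∀ y : ι → MvPolynomial σ K,
      ∑ j, y j * v j = 0 ↔ ∃ x : κ → MvPolynomial σ K, ∀ j, y j = ∑ i, M j i * x i)
    (k : ℕ) : LinearMap.ker (generatorMap hv k) = LinearMap.range (relationMap hM k) := by
  classical
  apply le_antisymm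
  · intro y hy
    obtain ⟨x, hx⟩ := (hexact fun j => y j).mp (congrArg Subtype.val hy)
    refine ⟨fun i => ⟨_, shiftedHomogeneousComponent_mem (b i) k (x i)⟩,
      funext fun j => Subtype.ext ?_⟩
    calc ∑ i, M j i * shiftedHomogeneousComponent (b i) k (x i)
        = shiftedHomogeneousComponent (a j) k (∑ i, M j i * x i) := by
          simp only [map_sum, shiftedHomogeneousComponent_mul (hM j _).1 (hM j _).2]
      _ = y j := by rw [← hx j, shiftedHomogeneousComponent_eq_self (y j).2]
  · rintro _ ⟨x, rfl⟩
    have hMv : ∀ i, ∑ j, M j i * v j = 0 := fun i =>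
      (hexact _).mpr ⟨Pi.single i 1, fun j => by simp [Pi.single_apply]⟩
    refine LinearMap.mem_ker.mpr (Subtype.ext ?_)
    calc ∑ j, (∑ i, M j i * (x i : MvPolynomial σ K)) * v j
        = ∑ i, (x i : MvPolynomial σ K) * ∑ j, M j i * v j := by
          simp only [Finset.sum_mul, Finset.mul_sum]
          rw [Finset.sum_comm]
          exact Finset.sum_congr rfl fun i _ => Finset.sum_congr rfl fun j _ => by ring
      _ = 0 := by simp [hMv]

theorem relationMap_injective [Fintype κ]
    (hM : ∀ j i, (M j i).IsHomogeneous (b i - a j) ∧ (M j i ≠ 0 → a j ≤ b i))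
    (hinj : ∀ x : κ → MvPolynomial σ K, (∀ j, ∑ i, M j i * x i = 0) → x = 0) (k : ℕ) :
    Function.Injective (relationMap hM k) := by
  refine (injective_iff_map_eq_zero _).mpr fun x hx => funext fun i => Subtype.ext ?_
  exact congrFun (hinj (fun i => x i) fun j => congrArg Subtype.val (congrFun hx j)) i

theorem finrank_quotient_span_add_sum_eq_of_resolution [Finite σ] [Fintype ι] [Fintype κ]
    (hv : ∀ j, (v j).IsHomogeneous (a j))
    (hM : ∀ j i, (M j i).IsHomogeneous (b i - a j) ∧ (M j i ≠ 0 → a j ≤ b i))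
    (hinj : ∀ x : κ → MvPolynomial σ K, (∀ j, ∑ i, M j i * x i = 0) → x = 0)
    (hexact : ∀ y : ι → MvPolynomial σ K,
      ∑ j, y j * v j = 0 ↔ ∃ x : κ → MvPolynomial σ K, ∀ j, y j = ∑ i, M j i * x i)
    (k : ℕ) :
    Module.finrank K (homogeneousSubmodule σ K k ⧸
        Submodule.comap (homogeneousSubmodule σ K k).subtype
          ((Ideal.span (Set.range v)).restrictScalars K)) +
      ∑ j, Module.finrank K (shiftedHomogeneousSubmodule σ K (a j) k) =
    Module.finrank K (homogeneousSubmodule σ K k) +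
      ∑ i, Module.finrank K (shiftedHomogeneousSubmodule σ K (b i) k) := by
  have hstrand := LinearMap.finrank_range_add_finrank_ker (generatorMap hv k)
  rw [ker_generatorMap hv hM hexact, LinearMap.finrank_range_of_inj
    (relationMap_injective hM hinj k), Module.finrank_pi_fintype, Module.finrank_pi_fintype]
    at hstrand
  have hquot := Submodule.finrank_quotient_add_finrank (LinearMap.range (generatorMap hv k))
  rw [range_generatorMap] at hstrand hquot
  omega

end Resolution

/-- The Hilbert polynomial `C(k - a + 2, 2)` of `S(-a)` for `S = K[x, y, z]`. -/
def shiftedHilbertPoly (a k : ℕ) : ℚ := ((k : ℚ) - a + 2) * ((k : ℚ) - a + 1) / 2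

theorem shiftedHilbertPoly_succ (a k : ℕ) :
    shiftedHilbertPoly a (k + 1) = shiftedHilbertPoly a k + ((k : ℚ) + 2 - a) := by
  unfold shiftedHilbertPoly
  push_cast
  ring

theorem finrank_shiftedHomogeneousSubmodule_add_ite {K : Type*} [Field K] {a k : ℕ}
    (hak : a ≤ k + 3) :
    (Module.finrank K (shiftedHomogeneousSubmodule (Fin 3) K a k) : ℚ) +
      (if a = k + 3 then 1 else 0) = shiftedHilbertPoly a k := by
  unfold shiftedHilbertPoly
  by_cases hle : a ≤ k
  · rw [shiftedHomogeneousSubmodule, if_pos hle, if_neg (by omega), finrank_homogeneousSubmodule,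
      Fintype.card_fin, show 3 + (k - a) - 1 = k - a + 2 by omega, Nat.choose_symm_add,
      Nat.cast_choose_two]
    push_cast [hle]
    ring
  · rw [shiftedHomogeneousSubmodule, if_neg hle, finrank_bot]
    obtain rfl | rfl | rfl : a = k + 1 ∨ a = k + 2 ∨ a = k + 3 := by omega
    all_goals norm_num

section HilbertPoly

variable {ι κ : Type*} [Fintype ι] [Fintype κ] {a : ι → ℕ} {b : κ → ℕ}

/-- The Hilbert polynomial read off the graded Betti numbers of a resolution
`0 → ⊕ᵢ S(-bᵢ) → ⊕ⱼ S(-aⱼ) → S`. -/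
def resolutionHilbertPoly (a : ι → ℕ) (b : κ → ℕ) (k : ℕ) : ℚ :=
  shiftedHilbertPoly 0 k - ∑ j, shiftedHilbertPoly (a j) k + ∑ i, shiftedHilbertPoly (b i) k

theorem resolutionHilbertPoly_succ (hcard : Fintype.card ι = Fintype.card κ + 1) (k : ℕ) :
    resolutionHilbertPoly a b (k + 1) =
      resolutionHilbertPoly a b k + (∑ j, (a j : ℚ) - ∑ i, (b i : ℚ)) := by
  simp only [resolutionHilbertPoly, shiftedHilbertPoly_succ, Finset.sum_add_distrib,
    Finset.sum_sub_distrib, Finset.sum_const, Finset.card_univ, hcard]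
  push_cast
  ring

theorem resolutionHilbertPoly_eq_of_eventually_eq (hcard : Fintype.card ι = Fintype.card κ + 1)
    {c : ℚ} {k₀ : ℕ} (h : ∀ k, k₀ ≤ k → resolutionHilbertPoly a b k = c) (k : ℕ) :
    resolutionHilbertPoly a b k = c := by
  have hslope : ∑ j, (a j : ℚ) - ∑ i, (b i : ℚ) = 0 := by
    have := resolutionHilbertPoly_succ (a := a) (b := b) hcard k₀
    rw [h k₀ le_rfl, h (k₀ + 1) (by omega)] at this
    linarith
  have hconst (k : ℕ) : resolutionHilbertPoly a b k = resolutionHilbertPoly a b 0 := by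
    induction k with
    | zero => rfl
    | succ k ih => rw [resolutionHilbertPoly_succ hcard, hslope, add_zero, ih]
  rw [hconst, ← hconst k₀, h k₀ le_rfl]

end HilbertPoly

theorem finrank_quotient_span_add_card_eq_resolutionHilbertPoly {K ι κ : Type*} [Field K]
    [Fintype ι] [Fintype κ] {a : ι → ℕ} {b : κ → ℕ} {v : ι → MvPolynomial (Fin 3) K}
    {M : ι → κ → MvPolynomial (Fin 3) K}
    (hv : ∀ j, (v j).IsHomogeneous (a j))
    (hM : ∀ j i, (M j i).IsHomogeneous (b i - a j) ∧ (M j i ≠ 0 → a j ≤ b i))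
    (hinj : ∀ x : κ → MvPolynomial (Fin 3) K, (∀ j, ∑ i, M j i * x i = 0) → x = 0)
    (hexact : ∀ y : ι → MvPolynomial (Fin 3) K,
      ∑ j, y j * v j = 0 ↔ ∃ x : κ → MvPolynomial (Fin 3) K, ∀ j, y j = ∑ i, M j i * x i)
    {k : ℕ} (ha : ∀ j, a j ≤ k + 2) (hb : ∀ i, b i ≤ k + 3) :
    (Module.finrank K (homogeneousSubmodule (Fin 3) K k ⧸
        Submodule.comap (homogeneousSubmodule (Fin 3) K k).subtype
          ((Ideal.span (Set.range v)).restrictScalars K)) : ℚ) +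
      (Finset.univ.filter fun i => b i = k + 3).card = resolutionHilbertPoly a b k := by
  have hdim := congrArg (Nat.cast : ℕ → ℚ)
    (finrank_quotient_span_add_sum_eq_of_resolution hv hM hinj hexact k)
  have h0 := finrank_shiftedHomogeneousSubmodule_add_ite (K := K) (a := 0) (k := k) (by omega)
  have hA : ∑ j, (Module.finrank K (shiftedHomogeneousSubmodule (Fin 3) K (a j) k) : ℚ) =
      ∑ j, shiftedHilbertPoly (a j) k := Finset.sum_congr rfl fun j _ => by
    simpa [show a j ≠ k + 3 by have := ha j; omega] using
      finrank_shiftedHomogeneousSubmodule_add_ite (K := K) (k := k) ((ha j).trans (by omega))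
  have hB : ∑ i, (Module.finrank K (shiftedHomogeneousSubmodule (Fin 3) K (b i) k) : ℚ) +
      (Finset.univ.filter fun i => b i = k + 3).card = ∑ i, shiftedHilbertPoly (b i) k := by
    rw [← Finset.sum_congr rfl fun i _ => finrank_shiftedHomogeneousSubmodule_add_ite (K := K)
      (hb i), Finset.sum_add_distrib, Finset.sum_boole]
  rw [shiftedHomogeneousSubmodule_zero] at h0
  push_cast at hdim h0
  rw [resolutionHilbertPoly, ← hA, ← hB, ← h0]
  linarith

section Evaluation

variable {σ K : Type*} [Field K]

theorem exists_linearForm_eval_eq_zero_eval_ne_zero [Fintype σ] {p q : σ → K} (hpq : p ∉ K ∙ q) :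
    ∃ ℓ : MvPolynomial σ K, ℓ.IsHomogeneous 1 ∧ eval q ℓ = 0 ∧ eval p ℓ ≠ 0 := by
  classical
  obtain ⟨f, hfp, hfq⟩ := Submodule.exists_dual_map_eq_bot_of_notMem hpq inferInstance
  have hf (x : σ → K) : eval x (∑ i, C (f (Pi.single i 1)) * X i) = f x := by
    simp only [f.pi_apply_eq_sum_univ x, map_sum, map_mul, eval_C, eval_X, smul_eq_mul, mul_comm]
    exact Finset.sum_congr rfl fun i _ => by congr; ext j; simp [Pi.single_apply, eq_comm]
  refine ⟨∑ i, C (f (Pi.single i 1)) * X i,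
    IsHomogeneous.sum _ _ _ fun i _ => isHomogeneous_C_mul_X _ i, ?_, by rwa [hf]⟩
  rw [hf, ← Submodule.mem_bot K, ← hfq]
  exact Submodule.mem_map_of_mem (Submodule.mem_span_singleton_self q)

/-- A product of linear forms, one through each other point, padded by a power of a linear form
not vanishing at `p`. -/
theorem exists_isHomogeneous_eval_ne_zero_eval_eq_zero [Fintype σ] {𝒩 : Finset (σ → K)}
    (h0 : ∀ p ∈ 𝒩, p ≠ 0) (hsep : ∀ p ∈ 𝒩, ∀ q ∈ 𝒩, (∃ c : K, c ≠ 0 ∧ p = c • q) → p = q)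
    {k : ℕ} (hk : 𝒩.card ≤ k + 1) {p : σ → K} (hp : p ∈ 𝒩) :
    ∃ h : MvPolynomial σ K, h.IsHomogeneous k ∧ eval p h ≠ 0 ∧
      ∀ q ∈ 𝒩, q ≠ p → eval q h = 0 := by
  classical
  have hnotMem : ∀ q ∈ 𝒩.erase p, p ∉ K ∙ q := by
    intro q hq hpq
    obtain ⟨c, hc⟩ := Submodule.mem_span_singleton.mp hpq
    have hc0 : c ≠ 0 := by rintro rfl; exact h0 p hp (by simp [← hc])
    obtain ⟨hqp, hq⟩ := Finset.mem_erase.mp hq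
    exact hqp (hsep p hp q hq ⟨c, hc0, hc.symm⟩).symm
  choose! ℓ hℓ using fun q hq => exists_linearForm_eval_eq_zero_eval_ne_zero (hnotMem q hq)
  obtain ⟨ℓ₀, hℓ₀, -, hℓ₀p⟩ :=
    exists_linearForm_eval_eq_zero_eval_ne_zero (p := p) (q := 0) (by simpa using h0 p hp)
  refine ⟨ℓ₀ ^ (k + 1 - 𝒩.card) * ∏ q ∈ 𝒩.erase p, ℓ q, ?_, ?_, fun q hq hqp => ?_⟩
  · have := (hℓ₀.pow (k + 1 - 𝒩.card)).mul
      (IsHomogeneous.prod _ _ (fun _ => 1) fun q hq => (hℓ q hq).1)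
    simpa [Finset.card_erase_of_mem hp, show k + 1 - 𝒩.card + (𝒩.card - 1) = k by
      have := Finset.card_pos.mpr ⟨p, hp⟩; omega] using this
  · simp only [map_mul, map_pow, map_prod]
    exact mul_ne_zero (pow_ne_zero _ hℓ₀p) (Finset.prod_ne_zero_iff.mpr fun q hq => (hℓ q hq).2.2)
  · have hq' : q ∈ 𝒩.erase p := Finset.mem_erase.mpr ⟨hqp, hq⟩
    simp only [map_mul, map_prod]
    rw [Finset.prod_eq_zero hq' (hℓ q hq').2.1, mul_zero]

def evalOnPoints (𝒩 : Finset (σ → K)) (k : ℕ) :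
    homogeneousSubmodule σ K k →ₗ[K] (𝒩 → K) :=
  LinearMap.pi fun q => (aeval (q : σ → K)).toLinearMap ∘ₗ (homogeneousSubmodule σ K k).subtype

theorem evalOnPoints_apply (𝒩 : Finset (σ → K)) (k : ℕ) (h : homogeneousSubmodule σ K k)
    (q : 𝒩) : evalOnPoints 𝒩 k h q = eval (q : σ → K) h := by
  simp [evalOnPoints]

theorem evalOnPoints_surjective [Fintype σ] {𝒩 : Finset (σ → K)} (h0 : ∀ p ∈ 𝒩, p ≠ 0)
    (hsep : ∀ p ∈ 𝒩, ∀ q ∈ 𝒩, (∃ c : K, c ≠ 0 ∧ p = c • q) → p = q)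
    {k : ℕ} (hk : 𝒩.card ≤ k + 1) : Function.Surjective (evalOnPoints 𝒩 k) := by
  classical
  rw [← LinearMap.range_eq_top, eq_top_iff]
  rintro u -
  rw [pi_eq_sum_univ u]
  refine sum_mem fun p _ => Submodule.smul_mem _ _ ?_
  obtain ⟨h, hk, hp, hq⟩ := exists_isHomogeneous_eval_ne_zero_eval_eq_zero h0 hsep hk p.2
  refine ⟨(eval (p : σ → K) h)⁻¹ • ⟨h, hk⟩, funext fun q => ?_⟩
  rw [map_smul, Pi.smul_apply, evalOnPoints_apply, smul_eq_mul]
  by_cases hpq : p = q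
  · simp [← hpq, hp]
  · simp [hpq, hq q q.2 fun h => hpq (Subtype.ext h.symm)]

theorem comap_subtype_eq_ker_evalOnPoints {𝒩 : Finset (σ → K)} {I : Ideal (MvPolynomial σ K)}
    (hI : ∀ h, h ∈ I ↔ ∀ p ∈ 𝒩, ∀ c : K, eval (c • p) h = 0) (k : ℕ) :
    Submodule.comap (homogeneousSubmodule σ K k).subtype (I.restrictScalars K) =
      LinearMap.ker (evalOnPoints 𝒩 k) := by
  ext h
  simp only [Submodule.mem_comap, Submodule.restrictScalars_mem, Submodule.subtype_apply, hI,
    LinearMap.mem_ker, funext_iff, evalOnPoints_apply, Pi.zero_apply]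
  refine ⟨fun H q => by simpa using H q q.2 1, fun H p hp c => ?_⟩
  rw [h.2.eval_smul, H ⟨p, hp⟩, mul_zero]

theorem ker_evalOnPoints (𝒩 : Finset (σ → K)) (k : ℕ) :
    LinearMap.ker (evalOnPoints 𝒩 k) = Submodule.comap (homogeneousSubmodule σ K k).subtype
      (⨅ p ∈ 𝒩, LinearMap.ker (aeval p : MvPolynomial σ K →ₐ[K] K).toLinearMap) := by
  ext h
  simp [Submodule.mem_iInf, funext_iff, evalOnPoints_apply]

end Evaluation

theorem vanishingSubmodule_eq_map_ker {n : ℕ} (𝒩 : Finset (Fin (n + 1) → ℂ)) (k : ℕ) :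
    vanishingSubmodule 𝒩 k =
      (LinearMap.ker (evalOnPoints 𝒩 k)).map (homogeneousSubmodule (Fin (n + 1)) ℂ k).subtype := by
  rw [ker_evalOnPoints, Submodule.map_comap_subtype]
  rfl

theorem gradedPieceDim_eq_card {n : ℕ} {𝒩 : Finset (Fin (n + 1) → ℂ)} {I' : Ideal (MvP n)}
    (h0 : ∀ p ∈ 𝒩, p ≠ 0) (hsep : ∀ p ∈ 𝒩, ∀ q ∈ 𝒩, (∃ c : ℂ, c ≠ 0 ∧ p = c • q) → p = q)
    (hI' : ∀ h, h ∈ I' ↔ ∀ p ∈ 𝒩, ∀ c : ℂ, eval (c • p) h = 0) {k : ℕ} (hk : 𝒩.card ≤ k + 1) :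
    gradedPieceDim I' k = 𝒩.card := by
  rw [gradedPieceDim, comap_subtype_eq_ker_evalOnPoints hI',
    (evalOnPoints 𝒩 k).quotKerEquivRange.finrank_eq,
    LinearMap.range_eq_top.mpr (evalOnPoints_surjective h0 hsep hk), finrank_top,
    Module.finrank_fintype_fun_eq_card, Fintype.card_coe]

theorem defect_eq_card_sub_gradedPieceDim {n : ℕ} {𝒩 : Finset (Fin (n + 1) → ℂ)}
    {I' : Ideal (MvP n)} (hI' : ∀ h, h ∈ I' ↔ ∀ p ∈ 𝒩, ∀ c : ℂ, eval (c • p) h = 0) (k : ℕ) :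
    defect k 𝒩 = 𝒩.card - gradedPieceDim I' k := by
  rw [defect, gradedPieceDim, comap_subtype_eq_ker_evalOnPoints hI', vanishingSubmodule_eq_map_ker,
    Submodule.finrank_map_subtype_eq]
  rw [← Submodule.finrank_quotient_add_finrank (LinearMap.ker (evalOnPoints 𝒩 k)),
    Nat.add_sub_cancel]

theorem statement19_general (N r t : ℕ) (𝒩 : Finset (Fin 3 → ℂ))
    (hpts : ∀ p ∈ 𝒩, p ≠ (0 : Fin 3 → ℂ))
    (hsep : ∀ p ∈ 𝒩, ∀ q ∈ 𝒩, (∃ c : ℂ, c ≠ 0 ∧ p = c • q) → p = q)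
    (I' : Ideal (MvPolynomial (Fin 3) ℂ))
    (hI' : ∀ h : MvPolynomial (Fin 3) ℂ,
      h ∈ I' ↔ ∀ p ∈ 𝒩, ∀ c : ℂ, eval (c • p) h = 0)
    (a : Fin (t + 1) → ℕ) (b : Fin t → ℕ)
    (ha : ∀ j, 0 < a j ∧ a j < N) (hb : ∀ i, 0 < b i ∧ b i ≤ N)
    (hbN : (Finset.univ.filter fun i => b i = N).card = r - 1)
    (v : Fin (t + 1) → MvPolynomial (Fin 3) ℂ)
    (hv : ∀ j, (v j).IsHomogeneous (a j))
    (M : Fin (t + 1) → Fin t → MvPolynomial (Fin 3) ℂ)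
    (hM : ∀ j i, (M j i).IsHomogeneous (b i - a j) ∧ (M j i ≠ 0 → a j ≤ b i))
    (hspan : Ideal.span (Set.range v) = I')
    (hinj : ∀ x : Fin t → MvPolynomial (Fin 3) ℂ,
      (∀ j, ∑ i, M j i * x i = 0) → x = 0)
    (hexact : ∀ y : Fin (t + 1) → MvPolynomial (Fin 3) ℂ,
      (∑ j, y j * v j) = 0 ↔
        ∃ x : Fin t → MvPolynomial (Fin 3) ℂ, ∀ j, y j = ∑ i, M j i * x i) :
    (∀ k : ℕ, N ≤ k + 2 → gradedPieceDim (n := 2) I' k = 𝒩.card) ∧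
    (∀ m : ℕ, m + 3 = N → gradedPieceDim (n := 2) I' m = 𝒩.card - (r - 1)) ∧
    (∀ k : ℕ, N < k + 3 → defect (n := 2) k 𝒩 = 0) ∧
    (∀ m : ℕ, m + 3 = N → defect (n := 2) m 𝒩 = r - 1) := by
  have hres : ∀ k, (∀ j, a j ≤ k + 2) → (∀ i, b i ≤ k + 3) →
      (gradedPieceDim (n := 2) I' k : ℚ) + (Finset.univ.filter fun i => b i = k + 3).card =
        resolutionHilbertPoly a b k := fun k hak hbk => by
    rw [gradedPieceDim, ← hspan]
    exact finrank_quotient_span_add_card_eq_resolutionHilbertPoly hv hM hinj hexact hak hbk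
  have hhigh : ∀ k, N ≤ k + 2 →
      (gradedPieceDim (n := 2) I' k : ℚ) = resolutionHilbertPoly a b k := fun k hk => by
    have hnone : (Finset.univ.filter fun i => b i = k + 3) = ∅ :=
      Finset.filter_false_of_mem fun i _ => by have := (hb i).2; omega
    simpa [hnone] using
      hres k (fun j => by have := (ha j).2; omega) fun i => by have := (hb i).2; omega
  have hQ : ∀ k, resolutionHilbertPoly a b k = 𝒩.card :=
    resolutionHilbertPoly_eq_of_eventually_eq (k₀ := N + 𝒩.card) (by simp) fun k hk => by
      rw [← hhigh k (by omega), gradedPieceDim_eq_card hpts hsep hI' (by omega)]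
  have hdim : ∀ k, N ≤ k + 2 → gradedPieceDim (n := 2) I' k = 𝒩.card := fun k hk => by
    exact_mod_cast (hhigh k hk).trans (hQ k)
  have hdim' : ∀ m, m + 3 = N → gradedPieceDim (n := 2) I' m + (r - 1) = 𝒩.card := by
    rintro m rfl
    have := hres m (fun j => by have := (ha j).2; omega) (fun i => (hb i).2)
    rw [hbN, hQ] at this
    exact_mod_cast this
  refine ⟨hdim, fun m hm => by have := hdim' m hm; omega, fun k hk => ?_, fun m hm => ?_⟩
  · rw [defect_eq_card_sub_gradedPieceDim hI', hdim k (by omega), Nat.sub_self]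
  · rw [defect_eq_card_sub_gradedPieceDim hI']
    have := hdim' m hm
    omega

/-- Let `𝒩` be a finite set of points in `ℙ^2` (given by nonzero,
pairwise non-proportional affine representatives) and `I'` its saturated homogeneous
ideal (the ideal of all polynomials vanishing on the cone over `𝒩`).  Suppose `S/I'` has
a graded minimal free resolution
`0 → ⊕_{i=1}^t S(-b_i) → ⊕_{j=1}^{t+1} S(-a_j) → S → S/I' → 0`
with `0 < a_j < N` for all `j`, `0 < b_i ≤ N` for all `i`, and exactly `r - 1` of the
`b_i` equal to `N`.  Then `dim (S/I')_k = |𝒩|` for all `k ≥ N - 2` and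
`dim (S/I')_{N-3} = |𝒩| - (r - 1)`; equivalently, `defect S_k(𝒩) = 0` for `k > N - 3`
and `defect S_{N-3}(𝒩) = r - 1`. -/
theorem statement19 (N r t : ℕ) (𝒩 : Finset (Fin 3 → ℂ))
    (hpts : ∀ p ∈ 𝒩, p ≠ (0 : Fin 3 → ℂ))
    (hsep : ∀ p ∈ 𝒩, ∀ q ∈ 𝒩, (∃ c : ℂ, c ≠ 0 ∧ p = c • q) → p = q)
    (I' : Ideal (MvPolynomial (Fin 3) ℂ))
    (hI' : ∀ h : MvPolynomial (Fin 3) ℂ,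
      h ∈ I' ↔ ∀ p ∈ 𝒩, ∀ c : ℂ, eval (c • p) h = 0)
    (a : Fin (t + 1) → ℕ) (b : Fin t → ℕ)
    (ha : ∀ j, 0 < a j ∧ a j < N) (hb : ∀ i, 0 < b i ∧ b i ≤ N)
    (hbN : (Finset.univ.filter fun i => b i = N).card = r - 1)
    (v : Fin (t + 1) → MvPolynomial (Fin 3) ℂ)
    (hv : ∀ j, (v j).IsHomogeneous (a j))
    (M : Fin (t + 1) → Fin t → MvPolynomial (Fin 3) ℂ)
    (hM : ∀ j i, (M j i).IsHomogeneous (b i - a j) ∧ (M j i ≠ 0 → a j ≤ b i))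
    (hmin : ∀ j i, MvPolynomial.coeff 0 (M j i) = 0)
    (hspan : Ideal.span (Set.range v) = I')
    (hinj : ∀ x : Fin t → MvPolynomial (Fin 3) ℂ,
      (∀ j, ∑ i, M j i * x i = 0) → x = 0)
    (hexact : ∀ y : Fin (t + 1) → MvPolynomial (Fin 3) ℂ,
      (∑ j, y j * v j) = 0 ↔
        ∃ x : Fin t → MvPolynomial (Fin 3) ℂ, ∀ j, y j = ∑ i, M j i * x i) :
    (∀ k : ℕ, N ≤ k + 2 → gradedPieceDim (n := 2) I' k = 𝒩.card) ∧
    (∀ m : ℕ, m + 3 = N → gradedPieceDim (n := 2) I' m = 𝒩.card - (r - 1)) ∧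
    (∀ k : ℕ, N < k + 3 → defect (n := 2) k 𝒩 = 0) ∧
    (∀ m : ℕ, m + 3 = N → defect (n := 2) m 𝒩 = r - 1) :=
  statement19_general N r t 𝒩 hpts hsep I' hI' a b ha hb hbN v hv M hM hspan hinj hexact

end
end
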